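/- Suppose the Riesz-spectral hypotheses hold, and for each k ∈ {1, …, m} let X_{e,k} ∈ D(𝒜) be the unique element with 𝒜 X_{e,k} = 0 and ℬ X_{e,k} = e_k. Then for every X₀ ∈ D(𝒜), every twice continuously differentiable d : [0,∞) → ℂ^m and every continuously differentiable U : [0,∞) → H with ℬ X₀ = d(0), every classical solution X associated with (X₀, d, U) satisfies, for all t ≥ 0, ‖X(t)‖ ≤ C₀ e^{−κ₀ t} ‖X₀‖ + C₁ · sup_{0≤s≤t} ‖d(s)‖ + C₂ · sup_{0≤s≤t} ‖U(s)‖, with the explicit constants C₀ = √(M_R/m_R), C₂ = (1/κ₀)·√(M_R/m_R) and C₁ = ζ · √( m · (M_R/m_R) · Σ_{k=1}^m ‖X_{e,k}‖² ). -/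

import Mathlib

noncomputable section

local notation "⟪" x ", " y "⟫" => @inner ℂ _ _ x y

/-- `f` is linear on the subset `s`. -/
def IsLinearOn {H K : Type*} [AddCommGroup H] [Module ℂ H] [AddCommGroup K] [Module ℂ K]
    (f : H → K) (s : Set H) : Prop :=
  (∀ x ∈ s, ∀ y ∈ s, f (x + y) = f x + f y) ∧ ∀ (c : ℂ), ∀ x ∈ s, f (c • x) = c • f x

/-- `X` is a classical solution of the boundary control system `(A, Bop)` with domain `domA`,
associated with initial condition `X0`, boundary disturbance `d` and distributed
disturbance `U`. -/
def IsClassicalSolution {H : Type*} [NormedAddCommGroup H] [NormedSpace ℂ H] {m : ℕ}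
    (A : H → H) (Bop : H → EuclideanSpace ℂ (Fin m)) (domA : Set H)
    (X0 : H) (d : ℝ → EuclideanSpace ℂ (Fin m)) (U : ℝ → H) (X : ℝ → H) : Prop :=
  ContinuousOn X (Set.Ici 0) ∧
  (∀ t ∈ Set.Ici (0:ℝ), X t ∈ domA) ∧
  ContinuousOn (fun t => A (X t)) (Set.Ici 0) ∧
  (∀ t ∈ Set.Ici (0:ℝ), HasDerivWithinAt X (A (X t) + U t) (Set.Ici 0) t) ∧
  X 0 = X0 ∧
  ∀ t ∈ Set.Ici (0:ℝ), Bop (X t) = d t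

/-! ### Auxiliary lemmas -/

section Aux

open intervalIntegral Set

/-- Variation of constants for a scalar linear ODE on `[0, ∞)`. -/
lemma voc_aux (lam : ℂ) (f g : ℝ → ℂ) (t : ℝ) (ht : 0 ≤ t)
    (hf : ContinuousOn f (Set.Ici 0)) (hg : ContinuousOn g (Set.Ici 0))
    (hderiv : ∀ s ∈ Set.Ici (0:ℝ), HasDerivWithinAt f (lam * f s + g s) (Set.Ici 0) s) :
    f t = Complex.exp (lam * t) * f 0
      + ∫ s in (0:ℝ)..t, Complex.exp (lam * (t - s)) * g s := by
  set F : ℝ → ℂ := fun s => Complex.exp (-lam * s) * f s with hF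
  have hFderiv : ∀ s ∈ Set.Ici (0:ℝ),
      HasDerivWithinAt F (Complex.exp (-lam * s) * g s) (Set.Ici 0) s := by
    intro s hs
    have h1 : HasDerivWithinAt (fun s : ℝ => Complex.exp (-lam * s))
        (-lam * Complex.exp (-lam * s)) (Set.Ici 0) s := by
      have hlin : HasDerivAt (fun y : ℝ => -lam * (y:ℂ)) (-lam) s := by
        simpa using ((hasDerivAt_id s).ofReal_comp.const_mul (-lam))
      have := hlin.cexp.hasDerivWithinAt (s := Set.Ici (0:ℝ))
      simpa [mul_comm] using this
    have h2 := h1.mul (hderiv s hs)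
    have heq : -lam * Complex.exp (-lam * (s:ℂ)) * f s
        + Complex.exp (-lam * (s:ℂ)) * (lam * f s + g s)
        = Complex.exp (-lam * (s:ℂ)) * g s := by ring
    rw [heq] at h2
    exact h2
  have hFc : ContinuousOn F (Set.Icc 0 t) :=
    ((Complex.continuous_exp.comp (continuous_const.mul
      Complex.continuous_ofReal)).continuousOn.mul (hf.mono Set.Icc_subset_Ici_self))
  have hint : IntervalIntegrable (fun s : ℝ => Complex.exp (-lam * s) * g s)
      MeasureTheory.volume 0 t := by
    apply ContinuousOn.intervalIntegrable
    rw [Set.uIcc_of_le ht]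
    exact (Complex.continuous_exp.comp (continuous_const.mul
      Complex.continuous_ofReal)).continuousOn.mul (hg.mono Set.Icc_subset_Ici_self)
  have hFTC := integral_eq_sub_of_hasDeriv_right_of_le ht hFc
    (fun x hx => (hFderiv x (Set.mem_Ici.2 (le_of_lt hx.1))).mono
      (Set.Ioi_subset_Ici_self.trans (Set.Ici_subset_Ici.2 (le_of_lt hx.1))))
    hint
  have hFt : F t = F 0 + ∫ s in (0:ℝ)..t, Complex.exp (-lam * s) * g s := by
    rw [hFTC]; ring
  have hexp : Complex.exp (lam * t) * Complex.exp (-lam * t) = 1 := by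
    rw [← Complex.exp_add]; ring_nf; exact Complex.exp_zero
  have key := congrArg (fun z => Complex.exp (lam * t) * z) hFt
  simp only [hF] at key
  rw [← mul_assoc, hexp, one_mul] at key
  have hintegrand : ∀ s ∈ Set.uIcc (0:ℝ) t,
      Complex.exp (lam * t) * (Complex.exp (-lam * s) * g s)
        = Complex.exp (lam * (t - s)) * g s := by
    intro s _
    rw [← mul_assoc, ← Complex.exp_add]
    congr 2
    push_cast
    ring
  rw [key, mul_add, ← intervalIntegral.integral_const_mul]
  congr 1
  · simp
  · exact intervalIntegral.integral_congr hintegrand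

lemma exp_integral_eq (r : ℝ) (hr : r ≠ 0) (t : ℝ) :
    ∫ s in (0:ℝ)..t, Real.exp (r * (t - s)) = (1 - Real.exp (r * t)) / (-r) := by
  have hG : ∀ s ∈ Set.uIcc (0:ℝ) t, HasDerivAt (fun s => -(1/r) * Real.exp (r * (t - s)))
      (Real.exp (r * (t - s))) s := by
    intro s _
    have h1 : HasDerivAt (fun s : ℝ => r * (t - s)) (-r) s := by
      simpa using ((hasDerivAt_id s).const_sub t).const_mul r
    have := (h1.exp).const_mul (-(1/r))
    refine this.congr_deriv ?_
    field_simp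
  have hint : IntervalIntegrable (fun s => Real.exp (r * (t - s))) MeasureTheory.volume 0 t :=
    (Real.continuous_exp.comp (continuous_const.mul
      (continuous_const.sub continuous_id))).intervalIntegrable 0 t
  rw [integral_eq_sub_of_hasDerivAt hG hint]
  simp
  field_simp
  ring

lemma exp_integral_le (r : ℝ) (hr : r < 0) (t : ℝ) (ht : 0 ≤ t) :
    ∫ s in (0:ℝ)..t, Real.exp (r * (t - s)) ≤ 1 / (-r) := by
  rw [exp_integral_eq r hr.ne t]
  have h1 : (0:ℝ) < -r := by linarith
  have h2 : 1 - Real.exp (r * t) ≤ 1 := by linarith [Real.exp_nonneg (r * t)]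
  gcongr

lemma decay_int_bound (r : ℝ) (hr : r < 0) (t : ℝ) (ht : 0 ≤ t) (h : ℝ → ℝ) (c : ℝ)
    (hh : ContinuousOn h (Set.Icc 0 t)) (hc : ∀ s ∈ Set.Icc 0 t, h s ≤ c)
    (hpos : ∀ s ∈ Set.Icc 0 t, 0 ≤ h s) :
    ∫ s in (0:ℝ)..t, Real.exp (r * (t - s)) * h s ≤ c / (-r) := by
  have hexpc : Continuous (fun s : ℝ => Real.exp (r * (t - s))) :=
    Real.continuous_exp.comp (continuous_const.mul (continuous_const.sub continuous_id))
  have hint1 : IntervalIntegrable (fun s => Real.exp (r * (t - s)) * h s)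
      MeasureTheory.volume 0 t := by
    apply ContinuousOn.intervalIntegrable
    rw [Set.uIcc_of_le ht]
    exact hexpc.continuousOn.mul hh
  have hint2 : IntervalIntegrable (fun s => Real.exp (r * (t - s)) * c)
      MeasureTheory.volume 0 t := (hexpc.mul continuous_const).intervalIntegrable 0 t
  have hmono := intervalIntegral.integral_mono_on ht hint1 hint2
    (fun s hs => mul_le_mul_of_nonneg_left (hc s hs) (Real.exp_nonneg _))
  have hc0 : 0 ≤ c := le_trans (hpos 0 ⟨le_refl _, ht⟩) (hc 0 ⟨le_refl _, ht⟩)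
  calc ∫ s in (0:ℝ)..t, Real.exp (r * (t - s)) * h s
      ≤ ∫ s in (0:ℝ)..t, Real.exp (r * (t - s)) * c := hmono
    _ = c * ∫ s in (0:ℝ)..t, Real.exp (r * (t - s)) := by
        rw [← intervalIntegral.integral_const_mul]; congr 1; ext s; ring
    _ ≤ c * (1 / (-r)) := mul_le_mul_of_nonneg_left (exp_integral_le r hr t ht) hc0
    _ = c / (-r) := by ring

lemma norm_int_bound (lam : ℂ) (g : ℝ → ℂ) (t : ℝ) (ht : 0 ≤ t) :
    ‖∫ s in (0:ℝ)..t, Complex.exp (lam * ((t - s : ℝ) : ℂ)) * g s‖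
      ≤ ∫ s in (0:ℝ)..t, Real.exp (lam.re * (t - s)) * ‖g s‖ := by
  refine (intervalIntegral.norm_integral_le_integral_norm ht).trans_eq ?_
  apply intervalIntegral.integral_congr
  intro s _
  simp only [norm_mul, Complex.norm_exp]
  congr 2
  simp [Complex.mul_re]

lemma l2_int_bound (N : ℕ) (u : ℕ → ℝ → ℝ) (r : ℝ) (hr : r < 0) (t : ℝ) (ht : 0 ≤ t) (c : ℝ)
    (hu : ∀ n, ContinuousOn (u n) (Set.Icc 0 t))
    (hbound : ∀ s ∈ Set.Icc 0 t, ∑ n ∈ Finset.range N, (u n s)^2 ≤ c^2) (hc : 0 ≤ c) :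
    ∑ n ∈ Finset.range N, (∫ s in (0:ℝ)..t, Real.exp (r*(t-s)) * u n s)^2 ≤ (c/(-r))^2 := by
  classical
  set W : ℝ → EuclideanSpace ℝ (Fin N) := fun s =>
    (EuclideanSpace.equiv (Fin N) ℝ).symm (fun i => u i s) with hW
  have hWcont : ContinuousOn W (Set.Icc 0 t) := by
    apply (EuclideanSpace.equiv (Fin N) ℝ).symm.continuous.comp_continuousOn
    exact continuousOn_pi.2 fun i => hu i
  set V : ℝ → EuclideanSpace ℝ (Fin N) := fun s => Real.exp (r*(t-s)) • W s with hV
  have hexpc : Continuous (fun s : ℝ => Real.exp (r * (t - s))) :=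
    Real.continuous_exp.comp (continuous_const.mul (continuous_const.sub continuous_id))
  have hVcont : ContinuousOn V (Set.Icc 0 t) := (hexpc.continuousOn).smul hWcont
  have hVint : IntervalIntegrable V MeasureTheory.volume 0 t := by
    apply ContinuousOn.intervalIntegrable
    rwa [Set.uIcc_of_le ht]
  have hWnorm : ∀ s ∈ Set.Icc 0 t, ‖W s‖ ≤ c := by
    intro s hs
    rw [EuclideanSpace.norm_eq]
    have h1 : ∑ i : Fin N, ‖(W s) i‖^2 = ∑ n ∈ Finset.range N, (u n s)^2 := by
      rw [Finset.sum_range (fun n => (u n s)^2)]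
      simp [hW, sq_abs]
    rw [h1, ← Real.sqrt_sq hc]
    exact Real.sqrt_le_sqrt (hbound s hs)
  have hVnorm : ∀ s ∈ Set.Icc 0 t, ‖V s‖ = Real.exp (r*(t-s)) * ‖W s‖ := by
    intro s _
    rw [hV]; simp [norm_smul, Real.abs_exp]
  have hnormI : ‖∫ s in (0:ℝ)..t, V s‖ ≤ c / (-r) := by
    refine (intervalIntegral.norm_integral_le_integral_norm ht).trans ?_
    rw [intervalIntegral.integral_congr (g := fun s => Real.exp (r*(t-s)) * ‖W s‖)
      (fun s hs => hVnorm s (by rwa [Set.uIcc_of_le ht] at hs))]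
    exact decay_int_bound r hr t ht _ c (hWcont.norm) hWnorm (fun s _ => norm_nonneg _)
  have hcoord : ∀ i : Fin N, (∫ s in (0:ℝ)..t, V s) i
      = ∫ s in (0:ℝ)..t, Real.exp (r*(t-s)) * u i s := by
    intro i
    have := (EuclideanSpace.proj (𝕜 := ℝ) i).intervalIntegral_comp_comm hVint
    simp only [PiLp.proj_apply] at this
    rw [← this]
    apply intervalIntegral.integral_congr
    intro s _
    simp [hV, hW, PiLp.proj_apply, PiLp.smul_apply, smul_eq_mul]
  have hfinal : ∑ n ∈ Finset.range N, (∫ s in (0:ℝ)..t, Real.exp (r*(t-s)) * u n s)^2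
      = ‖∫ s in (0:ℝ)..t, V s‖^2 := by
    rw [EuclideanSpace.norm_eq, Real.sq_sqrt (by positivity)]
    rw [Finset.sum_range fun i => (∫ s in (0:ℝ)..t, Real.exp (r*(t-s)) * u i s)^2]
    refine Finset.sum_congr rfl fun i _ => ?_
    rw [hcoord i]
    rw [Real.norm_eq_abs, sq_abs]
  rw [hfinal]
  exact pow_le_pow_left₀ (norm_nonneg _) hnormI 2

/-- Finite-dimensional `ℓ²` triangle inequality for a sum of three bounds. -/
lemma l2_triangle (N : ℕ) (x a b c : ℕ → ℝ) (ha : ∀ n, 0 ≤ a n) (hb : ∀ n, 0 ≤ b n)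
    (hc : ∀ n, 0 ≤ c n) (hx : ∀ n, |x n| ≤ a n + b n + c n) :
    Real.sqrt (∑ n ∈ Finset.range N, (x n)^2)
      ≤ Real.sqrt (∑ n ∈ Finset.range N, (a n)^2)
        + Real.sqrt (∑ n ∈ Finset.range N, (b n)^2)
        + Real.sqrt (∑ n ∈ Finset.range N, (c n)^2) := by
  classical
  set av : EuclideanSpace ℝ (Fin N) := (EuclideanSpace.equiv (Fin N) ℝ).symm (fun i => a i)
  set bv : EuclideanSpace ℝ (Fin N) := (EuclideanSpace.equiv (Fin N) ℝ).symm (fun i => b i)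
  set cv : EuclideanSpace ℝ (Fin N) := (EuclideanSpace.equiv (Fin N) ℝ).symm (fun i => c i)
  have hnorm : ∀ (f : ℕ → ℝ), ‖(EuclideanSpace.equiv (Fin N) ℝ).symm (fun i : Fin N => f i)‖
      = Real.sqrt (∑ n ∈ Finset.range N, (f n)^2) := by
    intro f
    rw [EuclideanSpace.norm_eq, Finset.sum_range (fun n => (f n)^2)]
    congr 1
    refine Finset.sum_congr rfl fun i _ => ?_
    simp [Real.norm_eq_abs, sq_abs]
  have h1 : Real.sqrt (∑ n ∈ Finset.range N, (x n)^2) ≤ ‖av + bv + cv‖ := by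
    rw [EuclideanSpace.norm_eq]
    apply Real.sqrt_le_sqrt
    rw [Finset.sum_range (fun n => (x n)^2)]
    refine Finset.sum_le_sum fun i _ => ?_
    have happ : ‖(av + bv + cv) i‖ = |a i + b i + c i| := by
      simp [av, bv, cv, Real.norm_eq_abs]
    rw [happ, sq_abs]
    calc (x (i:ℕ))^2 = |x (i:ℕ)|^2 := (sq_abs _).symm
      _ ≤ (a i + b i + c i)^2 := by
          apply pow_le_pow_left₀ (abs_nonneg _) (hx i) 2
  refine h1.trans ?_
  refine (norm_add₃_le).trans ?_
  rw [show (av : EuclideanSpace ℝ (Fin N)) = (EuclideanSpace.equiv (Fin N) ℝ).symm (fun i => a i) from rfl,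
    show (bv : EuclideanSpace ℝ (Fin N)) = (EuclideanSpace.equiv (Fin N) ℝ).symm (fun i => b i) from rfl,
    show (cv : EuclideanSpace ℝ (Fin N)) = (EuclideanSpace.equiv (Fin N) ℝ).symm (fun i => c i) from rfl,
    hnorm a, hnorm b, hnorm c]

end Aux

/-! ### Linearity helpers -/

section Lin
variable {H K : Type*} [AddCommGroup H] [Module ℂ H] [AddCommGroup K] [Module ℂ K]
  {domA : Set H}

lemma smul_sum_mem_domA (hdomA : ∀ x ∈ domA, ∀ y ∈ domA, ∀ a b : ℂ, a • x + b • y ∈ domA)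
    (h0 : (0:H) ∈ domA) {ι : Type*} (s : Finset ι) (c : ι → ℂ) (v : ι → H)
    (hv : ∀ i ∈ s, v i ∈ domA) : ∑ i ∈ s, c i • v i ∈ domA := by
  classical
  induction s using Finset.induction_on with
  | empty => simpa using h0
  | @insert a s' ha hx =>
    rw [Finset.sum_insert ha]
    have h1 := hdomA (v a) (hv a (Finset.mem_insert_self a s'))
      (∑ i ∈ s', c i • v i) (hx fun i hi => hv i (Finset.mem_insert_of_mem hi)) (c a) 1
    simpa using h1

lemma linOn_zero (f : H → K) (hf : IsLinearOn f domA) (h0 : (0:H) ∈ domA) : f 0 = 0 := by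
  have := hf.2 0 0 h0
  simpa using this

lemma linOn_sum (f : H → K) (hf : IsLinearOn f domA)
    (hdomA : ∀ x ∈ domA, ∀ y ∈ domA, ∀ a b : ℂ, a • x + b • y ∈ domA) (h0 : (0:H) ∈ domA)
    {ι : Type*} (s : Finset ι) (c : ι → ℂ) (v : ι → H) (hv : ∀ i ∈ s, v i ∈ domA) :
    f (∑ i ∈ s, c i • v i) = ∑ i ∈ s, c i • f (v i) := by
  classical
  induction s using Finset.induction_on with
  | empty => simpa using linOn_zero f hf h0
  | @insert a s' ha hx =>
    rw [Finset.sum_insert ha, Finset.sum_insert ha]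
    have hmem : ∑ i ∈ s', c i • v i ∈ domA :=
      smul_sum_mem_domA hdomA h0 s' c v fun i hi => hv i (Finset.mem_insert_of_mem hi)
    have hmem2 : c a • v a ∈ domA := by
      have := hdomA (v a) (hv a (Finset.mem_insert_self a s')) 0 h0 (c a) 0
      simpa using this
    rw [hf.1 _ hmem2 _ hmem, hf.2 (c a) (v a) (hv a (Finset.mem_insert_self a s')),
      hx fun i hi => hv i (Finset.mem_insert_of_mem hi)]

lemma sub_mem_domA (hdomA : ∀ x ∈ domA, ∀ y ∈ domA, ∀ a b : ℂ, a • x + b • y ∈ domA)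
    {x y : H} (hx : x ∈ domA) (hy : y ∈ domA) : x - y ∈ domA := by
  have := hdomA x hx y hy 1 (-1)
  simpa [sub_eq_add_neg] using this

lemma linOn_sub (f : H → K) (hf : IsLinearOn f domA)
    (hdomA : ∀ x ∈ domA, ∀ y ∈ domA, ∀ a b : ℂ, a • x + b • y ∈ domA)
    {x y : H} (hx : x ∈ domA) (hy : y ∈ domA) : f (x - y) = f x - f y := by
  have hy' : (-1 : ℂ) • y ∈ domA := by
    have := hdomA y hy y hy (-1) 0; simpa using this
  have h1 : f (x + (-1 : ℂ) • y) = f x + f ((-1 : ℂ) • y) := hf.1 x hx _ hy'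
  have h2 : f ((-1 : ℂ) • y) = (-1 : ℂ) • f y := hf.2 (-1) y hy
  have hxy : x - y = x + (-1 : ℂ) • y := by simp [sub_eq_add_neg]
  rw [hxy, h1, h2]
  simp [sub_eq_add_neg]

end Lin

set_option maxHeartbeats 4000000 in
/-- ISS estimate with explicit, energy-based constants (Theorem 2 of the paper). -/
theorem statement_1 {H : Type*} [NormedAddCommGroup H] [InnerProductSpace ℂ H] [CompleteSpace H]
    [TopologicalSpace.SeparableSpace H]
    {m : ℕ} (hm : 0 < m)
    (domA : Set H) (A : H → H) (Bop : H → EuclideanSpace ℂ (Fin m))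
    (hdomA : ∀ x ∈ domA, ∀ y ∈ domA, ∀ a b : ℂ, a • x + b • y ∈ domA)
    (hAlin : IsLinearOn A domA) (hBoplin : IsLinearOn Bop domA)
    (domAstar : Set H) (Astar : H → H)
    (hdense : Dense {x : H | x ∈ domA ∧ Bop x = 0})
    (hadjdom : ∀ z : H, z ∈ domAstar ↔ ∃ w : H, ∀ x ∈ domA, Bop x = 0 → ⟪w, x⟫ = ⟪z, A x⟫)
    (hadj : ∀ z ∈ domAstar, ∀ x ∈ domA, Bop x = 0 → ⟪Astar z, x⟫ = ⟪z, A x⟫)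
    (B : EuclideanSpace ℂ (Fin m) →L[ℂ] H)
    (hBdom : ∀ v, B v ∈ domA) (hBlift : ∀ v, Bop (B v) = v)
    (hABcont : Continuous fun v => A (B v))
    (lam : ℕ → ℂ) (φ ψ : ℕ → H)
    (hφmem : ∀ n, φ n ∈ domA ∧ Bop (φ n) = 0)
    (heig : ∀ n, A (φ n) = lam n • φ n)
    (hψmem : ∀ n, ψ n ∈ domAstar)
    (heigstar : ∀ n, Astar (ψ n) = (starRingEnd ℂ) (lam n) • ψ n)
    (hbiorth : ∀ n k : ℕ, ⟪ψ k, φ n⟫ = if n = k then (1:ℂ) else 0)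
    (mR MR : ℝ) (hmR : 0 < mR) (hmRMR : mR ≤ MR)
    (hRieszLower : ∀ (s : Finset ℕ) (a : ℕ → ℂ),
      mR * ∑ n ∈ s, ‖a n‖ ^ 2 ≤ ‖∑ n ∈ s, a n • φ n‖ ^ 2)
    (hRieszUpper : ∀ (s : Finset ℕ) (a : ℕ → ℂ),
      ‖∑ n ∈ s, a n • φ n‖ ^ 2 ≤ MR * ∑ n ∈ s, ‖a n‖ ^ 2)
    (hexpansion : ∀ x : H,
      Filter.Tendsto (fun N => ∑ n ∈ Finset.range N, ⟪ψ n, x⟫ • φ n) Filter.atTop (nhds x))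
    (ω0 : ℝ) (hω0 : IsLUB (Set.range fun n => (lam n).re) ω0) (hω0neg : ω0 < 0)
    (ζ : ℝ) (hζ : IsLUB (Set.range fun n => ‖lam n‖ / |(lam n).re|) ζ)
    (Xe : Fin m → H)
    (hXe : ∀ k, Xe k ∈ domA ∧ A (Xe k) = 0 ∧ Bop (Xe k) = EuclideanSpace.single k 1)
    (hXeuniq : ∀ k, ∀ Y ∈ domA, A Y = 0 → Bop Y = EuclideanSpace.single k 1 → Y = Xe k) :
    ∀ (X0 : H) (d : ℝ → EuclideanSpace ℂ (Fin m)) (U : ℝ → H) (X : ℝ → H),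
      X0 ∈ domA → ContDiffOn ℝ 2 d (Set.Ici 0) → ContDiffOn ℝ 1 U (Set.Ici 0) →
      Bop X0 = d 0 → IsClassicalSolution A Bop domA X0 d U X →
      ∀ t ∈ Set.Ici (0:ℝ),
        ‖X t‖ ≤ Real.sqrt (MR / mR) * Real.exp (ω0 * t) * ‖X0‖
          + (ζ * Real.sqrt ((m : ℝ) * (MR / mR) * ∑ k : Fin m, ‖Xe k‖ ^ 2))
              * sSup ((fun s => ‖d s‖) '' Set.Icc 0 t)
          + ((1 / (-ω0)) * Real.sqrt (MR / mR)) * sSup ((fun s => ‖U s‖) '' Set.Icc 0 t) := by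
  intro X0 d U X hX0dom hd hU hBX0 hsol t ht
  obtain ⟨hXcont, hXdom, hAXcont, hXderiv, hX00, hBX⟩ := hsol
  have ht' : (0:ℝ) ≤ t := ht
  have hMR0 : (0:ℝ) < MR := lt_of_lt_of_le hmR hmRMR
  have hrele : ∀ n, (lam n).re ≤ ω0 := fun n => hω0.1 ⟨n, rfl⟩
  have hren : ∀ n, (lam n).re < 0 := fun n => lt_of_le_of_lt (hrele n) hω0neg
  have hζn : ∀ n, ‖lam n‖ / |(lam n).re| ≤ ζ := fun n => hζ.1 ⟨n, rfl⟩
  have hζ0 : (0:ℝ) ≤ ζ := le_trans (by positivity) (hζn 0)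
  have hκ : (0:ℝ) < -ω0 := by linarith
  have h0dom : (0:H) ∈ domA := by
    have := hdomA X0 hX0dom X0 hX0dom 0 0
    simpa using this
  -- the boundary lift
  set W : ℝ → H := fun s => ∑ k : Fin m, (d s k) • Xe k with hWdef
  have hWdom : ∀ s : ℝ, W s ∈ domA := fun s =>
    smul_sum_mem_domA hdomA h0dom Finset.univ _ _ fun k _ => (hXe k).1
  have hAW : ∀ s : ℝ, A (W s) = 0 := by
    intro s
    rw [hWdef]
    rw [linOn_sum A hAlin hdomA h0dom Finset.univ _ _ fun k _ => (hXe k).1]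
    have : ∀ k : Fin m, A (Xe k) = 0 := fun k => (hXe k).2.1
    simp [this]
  have hBW : ∀ s : ℝ, Bop (W s) = d s := by
    intro s
    rw [hWdef, linOn_sum Bop hBoplin hdomA h0dom Finset.univ _ _ fun k _ => (hXe k).1]
    have hBXe : ∀ k : Fin m, Bop (Xe k) = EuclideanSpace.single k 1 := fun k => (hXe k).2.2
    simp_rw [hBXe]
    ext j
    have hsum : (∑ k : Fin m, d s k • EuclideanSpace.single k (1:ℂ)) j
        = ∑ k : Fin m, (d s k • EuclideanSpace.single k (1:ℂ)) j :=
      by rw [WithLp.ofLp_sum]; exact Finset.sum_apply j Finset.univ _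
    rw [hsum]
    simp [EuclideanSpace.single_apply]
  -- continuity
  have hdcont := hd.continuousOn
  have hUcont := hU.continuousOn
  have hWcont : ContinuousOn W (Set.Ici 0) := by
    apply continuousOn_finset_sum
    intro k _
    exact ((EuclideanSpace.proj (𝕜 := ℂ) k).continuous.comp_continuousOn hdcont).smul
      continuousOn_const
  -- coefficient functions
  set xc : ℕ → ℝ → ℂ := fun n s => ⟪ψ n, X s⟫ with hxc
  set un : ℕ → ℝ → ℂ := fun n s => ⟪ψ n, U s⟫ with hun
  set wn : ℕ → ℝ → ℂ := fun n s => ⟪ψ n, W s⟫ with hwn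
  have hxccont : ∀ n, ContinuousOn (xc n) (Set.Ici 0) :=
    fun n => ContinuousOn.inner continuousOn_const hXcont
  have huncont : ∀ n, ContinuousOn (un n) (Set.Ici 0) :=
    fun n => ContinuousOn.inner continuousOn_const hUcont
  have hwncont : ∀ n, ContinuousOn (wn n) (Set.Ici 0) :=
    fun n => ContinuousOn.inner continuousOn_const hWcont
  -- coefficient estimate (Bessel-type, from the lower frame bound)
  have hcoeff : ∀ (x : H) (N : ℕ),
      ∑ n ∈ Finset.range N, ‖(⟪ψ n, x⟫ : ℂ)‖^2 ≤ ‖x‖^2 / mR := by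
    intro x N
    rw [le_div_iff₀ hmR]
    have hlim : Filter.Tendsto (fun M => ‖∑ n ∈ Finset.range M, (⟪ψ n, x⟫ : ℂ) • φ n‖^2)
        Filter.atTop (nhds (‖x‖^2)) := ((hexpansion x).norm).pow 2
    refine ge_of_tendsto hlim (Filter.eventually_atTop.2 ⟨N, fun M hM => ?_⟩)
    calc (∑ n ∈ Finset.range N, ‖(⟪ψ n, x⟫:ℂ)‖^2) * mR
        = mR * ∑ n ∈ Finset.range N, ‖(⟪ψ n, x⟫:ℂ)‖^2 := mul_comm _ _
      _ ≤ mR * ∑ n ∈ Finset.range M, ‖(⟪ψ n, x⟫:ℂ)‖^2 := by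
          apply mul_le_mul_of_nonneg_left ?_ hmR.le
          exact Finset.sum_le_sum_of_subset_of_nonneg (Finset.range_subset_range.2 hM)
            (fun i _ _ => by positivity)
      _ ≤ ‖∑ n ∈ Finset.range M, (⟪ψ n, x⟫:ℂ) • φ n‖^2 := hRieszLower _ _
  -- per-mode ODE
  have hxcderiv : ∀ n, ∀ s ∈ Set.Ici (0:ℝ), HasDerivWithinAt (xc n)
      (lam n * xc n s + (un n s - lam n * wn n s)) (Set.Ici 0) s := by
    intro n s hs
    have hZdom : X s - W s ∈ domA := sub_mem_domA hdomA (hXdom s hs) (hWdom s)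
    have hBZ : Bop (X s - W s) = 0 := by
      rw [linOn_sub Bop hBoplin hdomA (hXdom s hs) (hWdom s), hBX s hs, hBW s, sub_self]
    have hAZ : A (X s - W s) = A (X s) := by
      rw [linOn_sub A hAlin hdomA (hXdom s hs) (hWdom s), hAW s, sub_zero]
    have hiAX : (⟪ψ n, A (X s)⟫ : ℂ) = lam n * (xc n s - wn n s) := by
      rw [← hAZ, ← hadj (ψ n) (hψmem n) _ hZdom hBZ, heigstar n, inner_smul_left,
        inner_sub_right]
      simp [hxc, hwn]
    have hd1 := HasFDerivAt.comp_hasDerivWithinAt s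
      (((innerSL ℂ (ψ n)).restrictScalars ℝ).hasFDerivAt) (hXderiv s hs)
    have hcomp : (((innerSL ℂ (ψ n)).restrictScalars ℝ) : H → ℂ) ∘ X = xc n := by
      funext r; simp [hxc]
    rw [hcomp] at hd1
    refine hd1.congr_deriv ?_; symm
    change _ = ((innerSL ℂ (ψ n)) (A (X s) + U s) : ℂ)
    rw [show ((innerSL ℂ (ψ n)) (A (X s) + U s) : ℂ) = ⟪ψ n, A (X s) + U s⟫ from rfl,
      inner_add_right, hiAX]
    simp only [hun]
    ring
  -- variation of constants
  have hgcont : ∀ n, ContinuousOn (fun s => un n s - lam n * wn n s) (Set.Ici 0) :=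
    fun n => (huncont n).sub (continuousOn_const.mul (hwncont n))
  have hvoc : ∀ n, xc n t = Complex.exp (lam n * t) * xc n 0
      + ∫ s in (0:ℝ)..t, Complex.exp (lam n * (t - s)) * (un n s - lam n * wn n s) :=
    fun n => voc_aux (lam n) (xc n) _ t ht' (hxccont n) (hgcont n) (hxcderiv n)
  have hexpc : ∀ n, Continuous (fun s : ℝ => Complex.exp (lam n * ((t - s : ℝ) : ℂ))) :=
    fun n => Complex.continuous_exp.comp (continuous_const.mul
      (Complex.continuous_ofReal.comp (continuous_const.sub continuous_id)))
  set Ju : ℕ → ℂ := fun n => ∫ s in (0:ℝ)..t, Complex.exp (lam n * ((t - s : ℝ) : ℂ)) * un n s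
    with hJudef
  set Jw : ℕ → ℂ := fun n =>
      ∫ s in (0:ℝ)..t, Complex.exp (lam n * ((t - s : ℝ) : ℂ)) * (lam n * wn n s) with hJwdef
  have hJuint : ∀ n, IntervalIntegrable
      (fun s : ℝ => Complex.exp (lam n * ((t - s : ℝ) : ℂ)) * un n s)
      MeasureTheory.volume 0 t := by
    intro n
    apply ContinuousOn.intervalIntegrable
    rw [Set.uIcc_of_le ht']
    exact (hexpc n).continuousOn.mul ((huncont n).mono Set.Icc_subset_Ici_self)
  have hJwint : ∀ n, IntervalIntegrable
      (fun s : ℝ => Complex.exp (lam n * ((t - s : ℝ) : ℂ)) * (lam n * wn n s))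
      MeasureTheory.volume 0 t := by
    intro n
    apply ContinuousOn.intervalIntegrable
    rw [Set.uIcc_of_le ht']
    exact (hexpc n).continuousOn.mul
      (continuousOn_const.mul ((hwncont n).mono Set.Icc_subset_Ici_self))
  have hsplit : ∀ n, xc n t = Complex.exp (lam n * t) * xc n 0 + (Ju n - Jw n) := by
    intro n
    rw [hvoc n]
    congr 1
    rw [hJudef, hJwdef, ← intervalIntegral.integral_sub (hJuint n) (hJwint n)]
    apply intervalIntegral.integral_congr
    intro s _
    push_cast
    ring
  -- suprema of the disturbances
  set D := sSup ((fun s => ‖d s‖) '' Set.Icc 0 t) with hDdef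
  set Us := sSup ((fun s => ‖U s‖) '' Set.Icc 0 t) with hUsdef
  have hdcont' : ContinuousOn (fun s => ‖d s‖) (Set.Icc 0 t) :=
    (hdcont.mono Set.Icc_subset_Ici_self).norm
  have hUcont' : ContinuousOn (fun s => ‖U s‖) (Set.Icc 0 t) :=
    (hUcont.mono Set.Icc_subset_Ici_self).norm
  have hDb : ∀ s ∈ Set.Icc (0:ℝ) t, ‖d s‖ ≤ D := fun s hs =>
    le_csSup (isCompact_Icc.bddAbove_image hdcont') ⟨s, hs, rfl⟩
  have hD0 : 0 ≤ D := le_trans (norm_nonneg (d 0)) (hDb 0 ⟨le_rfl, ht'⟩)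
  have hUb : ∀ s ∈ Set.Icc (0:ℝ) t, ‖U s‖ ≤ Us := fun s hs =>
    le_csSup (isCompact_Icc.bddAbove_image hUcont') ⟨s, hs, rfl⟩
  have hUs0 : 0 ≤ Us := le_trans (norm_nonneg (U 0)) (hUb 0 ⟨le_rfl, ht'⟩)
  -- coordinate bound in Euclidean space
  have hcoordle : ∀ (v : EuclideanSpace ℂ (Fin m)) (k : Fin m), ‖v k‖ ≤ ‖v‖ := by
    intro v k
    rw [EuclideanSpace.norm_eq, ← Real.sqrt_sq (norm_nonneg (v k))]
    exact Real.sqrt_le_sqrt (Finset.single_le_sum (f := fun i => ‖v i‖^2)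
      (fun i _ => by positivity) (Finset.mem_univ k))
  -- per-mode bound for `wn`
  have hwnb : ∀ n, ∀ s ∈ Set.Icc (0:ℝ) t,
      ‖wn n s‖ ≤ D * ∑ k : Fin m, ‖(⟪ψ n, Xe k⟫ : ℂ)‖ := by
    intro n s hs
    have hwexp : wn n s = ∑ k : Fin m, (d s k) * ⟪ψ n, Xe k⟫ := by
      rw [hwn]
      simp only [hWdef]
      rw [inner_sum]
      exact Finset.sum_congr rfl fun k _ => inner_smul_right _ _ _
    rw [hwexp]
    refine (norm_sum_le _ _).trans ?_
    rw [Finset.mul_sum]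
    refine Finset.sum_le_sum fun k _ => ?_
    rw [norm_mul]
    exact mul_le_mul ((hcoordle (d s) k).trans (hDb s hs)) le_rfl (norm_nonneg _) hD0
  -- the three per-mode bounding sequences
  set av : ℕ → ℝ := fun n => Real.exp (ω0 * t) * ‖xc n 0‖ with havdef
  set bv : ℕ → ℝ := fun n => ζ * D * ∑ k : Fin m, ‖(⟪ψ n, Xe k⟫ : ℂ)‖ with hbvdef
  set cv : ℕ → ℝ := fun n => ∫ s in (0:ℝ)..t, Real.exp (ω0 * (t - s)) * ‖un n s‖ with hcvdef
  have hav0 : ∀ n, 0 ≤ av n := fun n => by rw [havdef]; positivity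
  have hbv0 : ∀ n, 0 ≤ bv n := fun n => by
    rw [hbvdef]
    have : (0:ℝ) ≤ ∑ k : Fin m, ‖(⟪ψ n, Xe k⟫ : ℂ)‖ :=
      Finset.sum_nonneg fun k _ => norm_nonneg _
    positivity
  have hcv0 : ∀ n, 0 ≤ cv n := fun n =>
    intervalIntegral.integral_nonneg ht' (fun s _ => by positivity)
  -- the mode-wise estimate
  have hexprc : ∀ (r : ℝ), Continuous (fun s : ℝ => Real.exp (r * (t - s))) := fun r =>
    Real.continuous_exp.comp (continuous_const.mul (continuous_const.sub continuous_id))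
  have hmode : ∀ n, ‖xc n t‖ ≤ av n + bv n + cv n := by
    intro n
    have hSig0 : (0:ℝ) ≤ ∑ k : Fin m, ‖(⟪ψ n, Xe k⟫ : ℂ)‖ :=
      Finset.sum_nonneg fun k _ => norm_nonneg _
    have h1 : ‖Complex.exp (lam n * t) * xc n 0‖ ≤ av n := by
      rw [norm_mul, havdef]
      have he : ‖Complex.exp (lam n * (t:ℂ))‖ = Real.exp ((lam n).re * t) := by
        rw [Complex.norm_exp]
        congr 1
        simp [Complex.mul_re]
      rw [he]
      exact mul_le_mul_of_nonneg_right
        (Real.exp_le_exp.2 (mul_le_mul_of_nonneg_right (hrele n) ht')) (norm_nonneg _)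
    have h2 : ‖Ju n‖ ≤ cv n := by
      rw [hJudef, hcvdef]
      refine (norm_int_bound (lam n) (un n) t ht').trans ?_
      have hint1 : IntervalIntegrable (fun s => Real.exp ((lam n).re*(t-s)) * ‖un n s‖)
          MeasureTheory.volume 0 t := by
        apply ContinuousOn.intervalIntegrable
        rw [Set.uIcc_of_le ht']
        exact (hexprc _).continuousOn.mul ((huncont n).mono Set.Icc_subset_Ici_self).norm
      have hint2 : IntervalIntegrable (fun s => Real.exp (ω0*(t-s)) * ‖un n s‖)
          MeasureTheory.volume 0 t := by
        apply ContinuousOn.intervalIntegrable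
        rw [Set.uIcc_of_le ht']
        exact (hexprc _).continuousOn.mul ((huncont n).mono Set.Icc_subset_Ici_self).norm
      refine intervalIntegral.integral_mono_on ht' hint1 hint2 (fun s hs => ?_)
      have hts : 0 ≤ t - s := by linarith [hs.2]
      exact mul_le_mul_of_nonneg_right
        (Real.exp_le_exp.2 (mul_le_mul_of_nonneg_right (hrele n) hts)) (norm_nonneg _)
    have h3 : ‖Jw n‖ ≤ bv n := by
      rw [hJwdef, hbvdef]
      refine (norm_int_bound (lam n) (fun s => lam n * wn n s) t ht').trans ?_
      have hcb : ∀ s ∈ Set.Icc (0:ℝ) t, ‖lam n * wn n s‖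
          ≤ ‖lam n‖ * (D * ∑ k : Fin m, ‖(⟪ψ n, Xe k⟫ : ℂ)‖) := by
        intro s hs
        rw [norm_mul]
        exact mul_le_mul_of_nonneg_left (hwnb n s hs) (norm_nonneg _)
      have hDS0 : (0:ℝ) ≤ D * ∑ k : Fin m, ‖(⟪ψ n, Xe k⟫ : ℂ)‖ := mul_nonneg hD0 hSig0
      refine (decay_int_bound ((lam n).re) (hren n) t ht' _ _ ?_ hcb
        (fun s _ => norm_nonneg _)).trans ?_
      · exact (continuousOn_const.mul ((hwncont n).mono Set.Icc_subset_Ici_self)).norm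
      · have habs : -(lam n).re = |(lam n).re| := (abs_of_neg (hren n)).symm
        rw [div_le_iff₀ (by linarith [hren n])]
        calc ‖lam n‖ * (D * ∑ k : Fin m, ‖(⟪ψ n, Xe k⟫ : ℂ)‖)
            = (‖lam n‖ / |(lam n).re|) * (D * ∑ k : Fin m, ‖(⟪ψ n, Xe k⟫ : ℂ)‖)
              * (-(lam n).re) := by
              rw [habs]
              field_simp
              rw [mul_div_assoc, div_self (abs_ne_zero.2 (hren n).ne), mul_one]
          _ ≤ ζ * (D * ∑ k : Fin m, ‖(⟪ψ n, Xe k⟫ : ℂ)‖) * (-(lam n).re) := by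
              apply mul_le_mul_of_nonneg_right
                (mul_le_mul_of_nonneg_right (hζn n) hDS0) (by linarith [hren n])
          _ = ζ * D * (∑ k : Fin m, ‖(⟪ψ n, Xe k⟫ : ℂ)‖) * (-(lam n).re) := by ring
    have h4 : ‖xc n t‖ ≤ ‖Complex.exp (lam n * t) * xc n 0‖ + (‖Ju n‖ + ‖Jw n‖) := by
      rw [hsplit n]
      exact (norm_add_le _ _).trans (by gcongr; exact norm_sub_le _ _)
    linarith
  -- ℓ² bounds on the three bounding sequences
  set A' : ℝ := Real.exp (ω0*t) * (‖X0‖ / Real.sqrt mR) with hA'def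
  set B' : ℝ := ζ * D * Real.sqrt ((m:ℝ) * (∑ k : Fin m, ‖Xe k‖^2) / mR) with hB'def
  set C' : ℝ := (Us / Real.sqrt mR) / (-ω0) with hC'def
  have hsqmR : (0:ℝ) < Real.sqrt mR := Real.sqrt_pos.2 hmR
  have hA'0 : 0 ≤ A' := by rw [hA'def]; positivity
  have hB'0 : 0 ≤ B' := by rw [hB'def]; positivity
  have hC'0 : 0 ≤ C' := by rw [hC'def]; positivity
  have hA2 : ∀ N, ∑ n ∈ Finset.range N, (av n)^2 ≤ A'^2 := by
    intro N
    have e1 : ∑ n ∈ Finset.range N, (av n)^2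
        = Real.exp (ω0*t)^2 * ∑ n ∈ Finset.range N, ‖xc n 0‖^2 := by
      rw [Finset.mul_sum]
      exact Finset.sum_congr rfl fun n _ => by rw [havdef]; ring
    rw [e1, hA'def]
    have h2 : ∑ n ∈ Finset.range N, ‖xc n 0‖^2 ≤ ‖X0‖^2/mR := by
      have h3 := hcoeff X0 N
      simp only [hxc]
      rw [hX00]
      exact h3
    calc Real.exp (ω0*t)^2 * ∑ n ∈ Finset.range N, ‖xc n 0‖^2
        ≤ Real.exp (ω0*t)^2 * (‖X0‖^2/mR) := mul_le_mul_of_nonneg_left h2 (by positivity)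
      _ = (Real.exp (ω0*t) * (‖X0‖ / Real.sqrt mR))^2 := by
          rw [mul_pow, div_pow, Real.sq_sqrt hmR.le]
  have hB2 : ∀ N, ∑ n ∈ Finset.range N, (bv n)^2 ≤ B'^2 := by
    intro N
    have e1 : ∑ n ∈ Finset.range N, (bv n)^2
        = (ζ*D)^2 * ∑ n ∈ Finset.range N, (∑ k : Fin m, ‖(⟪ψ n, Xe k⟫ : ℂ)‖)^2 := by
      rw [Finset.mul_sum]
      exact Finset.sum_congr rfl fun n _ => by rw [hbvdef]; ring
    have h2 : ∑ n ∈ Finset.range N, (∑ k : Fin m, ‖(⟪ψ n, Xe k⟫ : ℂ)‖)^2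
        ≤ (m:ℝ) * ((∑ k : Fin m, ‖Xe k‖^2)/mR) := by
      calc ∑ n ∈ Finset.range N, (∑ k : Fin m, ‖(⟪ψ n, Xe k⟫ : ℂ)‖)^2
          ≤ ∑ n ∈ Finset.range N, (m:ℝ) * ∑ k : Fin m, ‖(⟪ψ n, Xe k⟫ : ℂ)‖^2 := by
            refine Finset.sum_le_sum fun n _ => ?_
            have := sq_sum_le_card_mul_sum_sq (s := (Finset.univ : Finset (Fin m)))
              (f := fun k => ‖(⟪ψ n, Xe k⟫ : ℂ)‖)
            simpa using this
        _ = (m:ℝ) * ∑ k : Fin m, ∑ n ∈ Finset.range N, ‖(⟪ψ n, Xe k⟫ : ℂ)‖^2 := by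
            rw [← Finset.mul_sum, Finset.sum_comm]
        _ ≤ (m:ℝ) * ∑ k : Fin m, ‖Xe k‖^2/mR := by
            refine mul_le_mul_of_nonneg_left ?_ (by positivity)
            exact Finset.sum_le_sum fun k _ => hcoeff (Xe k) N
        _ = (m:ℝ) * ((∑ k : Fin m, ‖Xe k‖^2)/mR) := by rw [← Finset.sum_div]
    rw [e1, hB'def]
    calc (ζ*D)^2 * ∑ n ∈ Finset.range N, (∑ k : Fin m, ‖(⟪ψ n, Xe k⟫ : ℂ)‖)^2
        ≤ (ζ*D)^2 * ((m:ℝ) * ((∑ k : Fin m, ‖Xe k‖^2)/mR)) :=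
          mul_le_mul_of_nonneg_left h2 (by positivity)
      _ = (ζ * D * Real.sqrt ((m:ℝ) * (∑ k : Fin m, ‖Xe k‖^2) / mR))^2 := by
          have hQ : Real.sqrt ((m:ℝ) * (∑ k : Fin m, ‖Xe k‖^2) / mR) ^ 2
              = (m:ℝ) * (∑ k : Fin m, ‖Xe k‖^2) / mR := Real.sq_sqrt (by positivity)
          linear_combination (-(ζ^2 * D^2)) * hQ
  have hC2 : ∀ N, ∑ n ∈ Finset.range N, (cv n)^2 ≤ C'^2 := by
    intro N
    refine l2_int_bound N (fun n s => ‖un n s‖) ω0 hω0neg t ht' (Us/Real.sqrt mR)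
      (fun n => ((huncont n).mono Set.Icc_subset_Ici_self).norm) ?_ (by positivity)
    intro s hs
    have h1 : ∑ n ∈ Finset.range N, ‖un n s‖^2 ≤ ‖U s‖^2/mR := hcoeff (U s) N
    refine h1.trans ?_
    rw [div_pow, Real.sq_sqrt hmR.le]
    exact div_le_div_of_nonneg_right (pow_le_pow_left₀ (norm_nonneg _) (hUb s hs) 2) hmR.le
  -- uniform bound on the partial sums
  have hbound : ∀ N, ‖∑ n ∈ Finset.range N, (⟪ψ n, X t⟫ : ℂ) • φ n‖
      ≤ Real.sqrt MR * A' + Real.sqrt MR * B' + Real.sqrt MR * C' := by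
    intro N
    have hup := hRieszUpper (Finset.range N) (fun n => xc n t)
    have h1 : ‖∑ n ∈ Finset.range N, (⟪ψ n, X t⟫ : ℂ) • φ n‖
        ≤ Real.sqrt MR * Real.sqrt (∑ n ∈ Finset.range N, ‖xc n t‖^2) := by
      rw [← Real.sqrt_mul hMR0.le, ← Real.sqrt_sq (norm_nonneg _)]
      exact Real.sqrt_le_sqrt hup
    have h2 := l2_triangle N (fun n => ‖xc n t‖) av bv cv hav0 hbv0 hcv0
      (fun n => by rw [abs_of_nonneg (norm_nonneg _)]; exact hmode n)
    have h3 : Real.sqrt (∑ n ∈ Finset.range N, (av n)^2) ≤ A' :=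
      (Real.sqrt_le_sqrt (hA2 N)).trans_eq (Real.sqrt_sq hA'0)
    have h4 : Real.sqrt (∑ n ∈ Finset.range N, (bv n)^2) ≤ B' :=
      (Real.sqrt_le_sqrt (hB2 N)).trans_eq (Real.sqrt_sq hB'0)
    have h5 : Real.sqrt (∑ n ∈ Finset.range N, (cv n)^2) ≤ C' :=
      (Real.sqrt_le_sqrt (hC2 N)).trans_eq (Real.sqrt_sq hC'0)
    calc ‖∑ n ∈ Finset.range N, (⟪ψ n, X t⟫ : ℂ) • φ n‖
        ≤ Real.sqrt MR * Real.sqrt (∑ n ∈ Finset.range N, ‖xc n t‖^2) := h1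
      _ ≤ Real.sqrt MR * (A' + B' + C') := by
          apply mul_le_mul_of_nonneg_left ?_ (Real.sqrt_nonneg _)
          exact h2.trans (by linarith)
      _ = Real.sqrt MR * A' + Real.sqrt MR * B' + Real.sqrt MR * C' := by ring
  have hfin := le_of_tendsto (Filter.Tendsto.norm (hexpansion (X t)))
    (Filter.Eventually.of_forall hbound)
  refine hfin.trans (le_of_eq ?_)
  rw [hA'def, hB'def, hC'def]
  have hq : Real.sqrt (MR/mR) = Real.sqrt MR / Real.sqrt mR := Real.sqrt_div hMR0.le mR
  have h2 : Real.sqrt MR * Real.sqrt ((m:ℝ) * (∑ k : Fin m, ‖Xe k‖^2) / mR)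
      = Real.sqrt ((m:ℝ) * (MR/mR) * ∑ k : Fin m, ‖Xe k‖^2) := by
    rw [← Real.sqrt_mul hMR0.le]
    congr 1
    ring
  rw [hq, ← h2]
  field_simp
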